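/- arXiv:0709.3345 — 5 statements merged into one kernel-verified Lean document; each statement's English description precedes it below -/
import Mathlib

section
/- For the binomial second central moment: for all m ∈ ℕ, x ∈ [0,1], and 0 ≤ α₁ ≤ β₁, one has ∑_{ν=0}^m C(m,ν) x^ν (1-x)^{m-ν} ( (ν+α₁)/(m+β₁) − x )² ≤ (4β₁² + m)/(m+β₁)². -/
theorem bernstein_stancu_second_central_moment (α₁ β₁ : ℝ) (hα₁ : 0 ≤ α₁) (hβ₁ : α₁ ≤ β₁)
    (m : ℕ) (hm : 1 ≤ m) (x : ℝ) (hx : x ∈ Set.Icc (0:ℝ) 1) :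
    ∑ ν ∈ Finset.range (m + 1),
        (m.choose ν : ℝ) * x ^ ν * (1 - x) ^ (m - ν) * ((ν + α₁) / (m + β₁) - x) ^ 2 ≤
      (4 * β₁ ^ 2 + m) / (m + β₁) ^ 2 := by
  obtain ⟨hx0, hx1⟩ := hx
  have hβ0 : 0 ≤ β₁ := le_trans hα₁ hβ₁
  have hm1 : (1:ℝ) ≤ (m:ℝ) := by exact_mod_cast hm
  have hc : (0:ℝ) < (m:ℝ) + β₁ := by linarith
  have hc' : ((m:ℝ) + β₁) ≠ 0 := ne_of_gt hc
  set b : ℕ → ℝ := fun ν => (m.choose ν : ℝ) * x ^ ν * (1 - x) ^ (m - ν) with hb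
  have hbe : ∀ ν, b ν = (bernsteinPolynomial ℝ m ν).eval x := by
    intro ν; simp [hb, bernsteinPolynomial]
  have S0 : ∑ ν ∈ Finset.range (m + 1), b ν = 1 := by
    have := congrArg (Polynomial.eval x) (bernsteinPolynomial.sum ℝ m)
    simpa [Polynomial.eval_finset_sum, hbe] using this
  have S1 : ∑ ν ∈ Finset.range (m + 1), (ν : ℝ) * b ν = m * x := by
    have := congrArg (Polynomial.eval x) (bernsteinPolynomial.sum_smul ℝ m)
    simpa [Polynomial.eval_finset_sum, hbe, mul_comm] using this
  have S2 : ∑ ν ∈ Finset.range (m + 1), ((m : ℝ) * x - ν) ^ 2 * b ν = m * x * (1 - x) := by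
    have := congrArg (Polynomial.eval x) (bernsteinPolynomial.variance ℝ m)
    simpa [Polynomial.eval_finset_sum, hbe] using this
  set B : ℝ := α₁ - β₁ * x with hB
  have expand : ∀ ν ∈ Finset.range (m + 1),
      b ν * ((ν + α₁) / (m + β₁) - x) ^ 2 =
        (((m : ℝ) * x - ν) ^ 2 * b ν + 2 * B * ((ν : ℝ) * b ν)
          + (B ^ 2 - 2 * B * (m * x)) * b ν) / ((m:ℝ) + β₁) ^ 2 := by
    intro ν _
    field_simp
    ring
  have sum_eq : ∑ ν ∈ Finset.range (m + 1), b ν * ((ν + α₁) / (m + β₁) - x) ^ 2 =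
      (m * x * (1 - x) + B ^ 2) / ((m:ℝ) + β₁) ^ 2 := by
    rw [Finset.sum_congr rfl expand]
    rw [← Finset.sum_div]
    rw [Finset.sum_add_distrib, Finset.sum_add_distrib, ← Finset.mul_sum, ← Finset.mul_sum,
      S0, S1, S2]
    ring
  have hterm : ∀ ν, (m.choose ν : ℝ) * x ^ ν * (1 - x) ^ (m - ν) * ((ν + α₁) / (m + β₁) - x) ^ 2
      = b ν * ((ν + α₁) / (m + β₁) - x) ^ 2 := fun ν => rfl
  simp_rw [hterm]
  rw [sum_eq]
  apply div_le_div_of_nonneg_right ?_ (by positivity) |>.trans_eq rfl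
  -- numerator bound
  have h1 : m * x * (1 - x) ≤ (m:ℝ) := by nlinarith [mul_nonneg (by linarith : (0:ℝ) ≤ (m:ℝ)) (sq_nonneg (x - 1/2))]
  have hBabs : B ^ 2 ≤ β₁ ^ 2 := by
    have h1 : B ≤ β₁ := by nlinarith
    have h2 : -β₁ ≤ B := by nlinarith
    nlinarith
  nlinarith
end

section
/- With ρ(x,y) = 1 + x² + y², the weighted norm ‖L_{m,n}(t²+τ²; x,y) − (x²+y²)‖_ρ = sup_{(x,y)∈[0,1]×[0,∞)} |L_{m,n}(t²+τ²;x,y) − x² − y²| / (1+x²+y²) tends to 0 as m,n → ∞. -/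
/-- The bivariate Stancu–Szász type operator of the paper:
`L α₁ β₁ α₂ β₂ m n f x y = ∑_{k≥0} ∑_{ν=0}^m C(m,ν) x^ν (1-x)^{m-ν} e^{-ny}(ny)^k/k! ·
  f((ν+α₁)/(m+β₁), (k+α₂)/(n+β₂))`. -/
noncomputable def L (α₁ β₁ α₂ β₂ : ℝ) (m n : ℕ) (f : ℝ → ℝ → ℝ) (x y : ℝ) : ℝ :=
  ∑' k : ℕ, ∑ ν ∈ Finset.range (m + 1),
    ((m.choose ν : ℝ) * x ^ ν * (1 - x) ^ (m - ν)) *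
      (Real.exp (-(n * y)) * (n * y) ^ k / (Nat.factorial k : ℝ)) *
      f ((ν + α₁) / (m + β₁)) ((k + α₂) / (n + β₂))

/-!
On `t² + τ²` the operator separates into the second moment of the Bernstein weights in `x` and
that of the Szász–Mirakjan (Poisson) weights in `y`; both are explicit rational functions of
`m` and `n`. Subtracting `x²` and `y²` leaves numerators of size `O(m) (1 + x²)` and
`O(n) (1 + y²)` over denominators at least `m²` and `n²`, so the weight `1 + x² + y²` turns the
error into the uniform bound `C₁ / m + C₂ / n`.
-/

open Finset Real

section Szasz

variable (r : ℝ)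

theorem hasSum_pow_div_factorial : HasSum (fun k : ℕ => r ^ k / k.factorial) (exp r) := by
  simpa [Real.exp_eq_exp_ℝ] using NormedSpace.expSeries_div_hasSum_exp r

theorem hasSum_natCast_mul_pow_div_factorial :
    HasSum (fun k : ℕ => k * r ^ k / k.factorial) (r * exp r) := by
  rw [← hasSum_nat_add_iff' 1, sum_range_one, Nat.cast_zero, zero_mul, zero_div, sub_zero]
  refine ((hasSum_pow_div_factorial r).mul_left r).congr_fun fun k => ?_
  rw [Nat.factorial_succ]
  push_cast
  field_simp
  ring

theorem hasSum_natCast_sq_mul_pow_div_factorial :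
    HasSum (fun k : ℕ => (k : ℝ) ^ 2 * r ^ k / k.factorial) ((r ^ 2 + r) * exp r) := by
  rw [← hasSum_nat_add_iff' 1, sum_range_one, Nat.cast_zero, zero_pow two_ne_zero, zero_mul,
    zero_div, sub_zero, show (r ^ 2 + r) * exp r = r * (r * exp r + exp r) by ring]
  refine (((hasSum_natCast_mul_pow_div_factorial r).add
    (hasSum_pow_div_factorial r)).mul_left r).congr_fun fun k => ?_
  rw [Nat.factorial_succ]
  push_cast
  field_simp
  ring

theorem hasSum_add_sq_mul_pow_div_factorial (a : ℝ) :
    HasSum (fun k : ℕ => ((k : ℝ) + a) ^ 2 * r ^ k / k.factorial)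
      ((r ^ 2 + (2 * a + 1) * r + a ^ 2) * exp r) := by
  rw [show (r ^ 2 + (2 * a + 1) * r + a ^ 2) * exp r =
    (r ^ 2 + r) * exp r + 2 * a * (r * exp r) + a ^ 2 * exp r by ring]
  refine (((hasSum_natCast_sq_mul_pow_div_factorial r).add
    ((hasSum_natCast_mul_pow_div_factorial r).mul_left (2 * a))).add
    ((hasSum_pow_div_factorial r).mul_left (a ^ 2))).congr_fun fun k => ?_
  ring

theorem hasSum_szasz_basis : HasSum (fun k : ℕ => exp (-r) * r ^ k / k.factorial) 1 := by
  simpa [mul_div_assoc, ← exp_add] using (hasSum_pow_div_factorial r).mul_left (exp (-r))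

theorem hasSum_szasz_basis_mul_add_div_sq (a c : ℝ) :
    HasSum (fun k : ℕ => exp (-r) * r ^ k / k.factorial * (((k : ℝ) + a) / c) ^ 2)
      ((r ^ 2 + (2 * a + 1) * r + a ^ 2) / c ^ 2) := by
  have h := (hasSum_add_sq_mul_pow_div_factorial r a).mul_left (exp (-r) / c ^ 2)
  rw [mul_comm, mul_div_assoc', mul_assoc, ← exp_add, add_neg_cancel, exp_zero, mul_one] at h
  exact h.congr_fun fun k => by ring

end Szasz

section Bernstein

variable (m : ℕ) (x : ℝ)

theorem sum_bernstein_eval :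
    ∑ ν ∈ range (m + 1), (m.choose ν : ℝ) * x ^ ν * (1 - x) ^ (m - ν) = 1 := by
  simpa [bernsteinPolynomial, Polynomial.eval_finsetSum] using
    congrArg (Polynomial.eval x) (bernsteinPolynomial.sum ℝ m)

theorem sum_natCast_mul_bernstein_eval :
    ∑ ν ∈ range (m + 1), (ν : ℝ) * ((m.choose ν : ℝ) * x ^ ν * (1 - x) ^ (m - ν)) = m * x := by
  simpa [bernsteinPolynomial, Polynomial.eval_finsetSum] using
    congrArg (Polynomial.eval x) (bernsteinPolynomial.sum_smul ℝ m)

theorem sum_natCast_mul_sub_one_mul_bernstein_eval :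
    ∑ ν ∈ range (m + 1), (ν : ℝ) * (ν - 1) * ((m.choose ν : ℝ) * x ^ ν * (1 - x) ^ (m - ν)) =
      m * (m - 1) * x ^ 2 := by
  have cast_mul_pred (j : ℕ) : (j : ℝ) * ((j - 1 : ℕ) : ℝ) = j * (j - 1) := by
    rcases j with _ | j <;> simp
  simpa [bernsteinPolynomial, Polynomial.eval_finsetSum, cast_mul_pred] using
    congrArg (Polynomial.eval x) (bernsteinPolynomial.sum_mul_smul ℝ m)

theorem sum_bernstein_eval_mul_add_div_sq (a c : ℝ) :
    ∑ ν ∈ range (m + 1), (m.choose ν : ℝ) * x ^ ν * (1 - x) ^ (m - ν) * (((ν : ℝ) + a) / c) ^ 2 =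
      (((m : ℝ) ^ 2 - m) * x ^ 2 + (2 * a + 1) * m * x + a ^ 2) / c ^ 2 := by
  set p : ℕ → ℝ := fun ν => (m.choose ν : ℝ) * x ^ ν * (1 - x) ^ (m - ν)
  have expand (ν : ℕ) : p ν * (((ν : ℝ) + a) / c) ^ 2 =
      (ν * (ν - 1) * p ν + (2 * a + 1) * (ν * p ν) + a ^ 2 * p ν) / c ^ 2 := by
    ring
  rw [sum_congr rfl fun ν _ => expand ν, ← sum_div, sum_add_distrib, sum_add_distrib, ← mul_sum,
    ← mul_sum, sum_natCast_mul_sub_one_mul_bernstein_eval, sum_natCast_mul_bernstein_eval,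
    sum_bernstein_eval]
  ring

end Bernstein

theorem hasSum_sum_mul_mul_add {R ι β : Type*} [CommSemiring R] [TopologicalSpace R]
    [IsTopologicalSemiring R] {s : Finset ι} {p g : ι → R} {q h : β → R} {Q H : R}
    (hq : HasSum q Q) (hqh : HasSum (fun k => q k * h k) H) :
    HasSum (fun k => ∑ ν ∈ s, p ν * q k * (g ν + h k))
      ((∑ ν ∈ s, p ν * g ν) * Q + (∑ ν ∈ s, p ν) * H) := by
  rw [sum_mul, sum_mul, ← sum_add_distrib]
  refine hasSum_sum fun ν _ => ?_
  exact ((hq.mul_left (p ν * g ν)).add (hqh.mul_left (p ν))).congr_fun fun k => by ring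

theorem L_sq_add_sq (α₁ β₁ α₂ β₂ : ℝ) (m n : ℕ) (x y : ℝ) :
    L α₁ β₁ α₂ β₂ m n (fun t τ => t ^ 2 + τ ^ 2) x y =
      (((m : ℝ) ^ 2 - m) * x ^ 2 + (2 * α₁ + 1) * m * x + α₁ ^ 2) / ((m : ℝ) + β₁) ^ 2 +
      (((n : ℝ) * y) ^ 2 + (2 * α₂ + 1) * (n * y) + α₂ ^ 2) / ((n : ℝ) + β₂) ^ 2 := by
  have h := hasSum_sum_mul_mul_add (s := range (m + 1))
    (p := fun ν => (m.choose ν : ℝ) * x ^ ν * (1 - x) ^ (m - ν))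
    (g := fun ν => (((ν : ℝ) + α₁) / (m + β₁)) ^ 2) (hasSum_szasz_basis (n * y))
    (hasSum_szasz_basis_mul_add_div_sq (n * y) α₂ (n + β₂))
  rw [sum_bernstein_eval_mul_add_div_sq, sum_bernstein_eval, mul_one, one_mul] at h
  exact h.tsum_eq

section ErrorBounds

variable {a b M : ℝ}

theorem abs_szasz_moment_sub_sq_le (ha : 0 ≤ a) (hb : 0 ≤ b) (hM : 1 ≤ M) {v : ℝ} (hv : 0 ≤ v) :
    |((M * v) ^ 2 + (2 * a + 1) * (M * v) + a ^ 2) / (M + b) ^ 2 - v ^ 2| ≤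
      (a + b + 1) ^ 2 / M * (1 + v ^ 2) := by
  have hM₀ : 0 < M := by linarith
  set P := a ^ 2 + (2 * a + 1) * M * v
  set Q := (2 * b * M + b ^ 2) * v ^ 2
  have hP : 0 ≤ P := by positivity
  have hQ : 0 ≤ Q := by positivity
  have hPQ : P + Q ≤ (a + b + 1) ^ 2 * M * (1 + v ^ 2) := by
    nlinarith [mul_nonneg (sq_nonneg a) (by nlinarith : 0 ≤ M * (1 + v ^ 2) - 1),
      mul_nonneg (sq_nonneg b) (by nlinarith : 0 ≤ M * (1 + v ^ 2) - v ^ 2),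
      mul_nonneg (by positivity : 0 ≤ (2 * a + 1) * M) (by nlinarith : 0 ≤ 1 + v ^ 2 - v),
      mul_nonneg (mul_nonneg ha hb) (by positivity : 0 ≤ M * (1 + v ^ 2)),
      mul_nonneg hb (by positivity : 0 ≤ M), mul_nonneg ha (by positivity : 0 ≤ M)]
  have hden : M ^ 2 ≤ (M + b) ^ 2 := by nlinarith
  have hsplit : ((M * v) ^ 2 + (2 * a + 1) * (M * v) + a ^ 2) / (M + b) ^ 2 - v ^ 2 =
      (P - Q) / (M + b) ^ 2 := by
    simp only [P, Q]
    field_simp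
    ring
  calc |((M * v) ^ 2 + (2 * a + 1) * (M * v) + a ^ 2) / (M + b) ^ 2 - v ^ 2|
      = |P - Q| / (M + b) ^ 2 := by
        rw [hsplit, abs_div, abs_of_pos (by positivity : 0 < (M + b) ^ 2)]
    _ ≤ (P + Q) / M ^ 2 := by
        gcongr
        exact (abs_sub _ _).trans (by rw [abs_of_nonneg hP, abs_of_nonneg hQ])
    _ ≤ (a + b + 1) ^ 2 * M * (1 + v ^ 2) / M ^ 2 := by gcongr
    _ = (a + b + 1) ^ 2 / M * (1 + v ^ 2) := by field_simp

theorem abs_bernstein_moment_sub_sq_le (ha : 0 ≤ a) (hb : 0 ≤ b) (hM : 1 ≤ M) {u : ℝ}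
    (hu : 0 ≤ u) :
    |((M ^ 2 - M) * u ^ 2 + (2 * a + 1) * M * u + a ^ 2) / (M + b) ^ 2 - u ^ 2| ≤
      ((a + b + 1) ^ 2 + 1) / M * (1 + u ^ 2) := by
  have hM₀ : 0 < M := by linarith
  have hcorr : M * u ^ 2 / (M + b) ^ 2 ≤ 1 / M * (1 + u ^ 2) := by
    rw [div_le_iff₀ (by positivity)]
    field_simp
    nlinarith [mul_nonneg (mul_nonneg hM₀.le hb) (sq_nonneg u), sq_nonneg b,
      mul_nonneg (sq_nonneg b) (sq_nonneg u), sq_nonneg M, mul_nonneg hM₀.le hb]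
  -- `(M ^ 2 - M) u ^ 2 = (M u) ^ 2 - M u ^ 2`: the Szász bound plus a correction of order `1 / M`.
  calc |((M ^ 2 - M) * u ^ 2 + (2 * a + 1) * M * u + a ^ 2) / (M + b) ^ 2 - u ^ 2|
      = |(((M * u) ^ 2 + (2 * a + 1) * (M * u) + a ^ 2) / (M + b) ^ 2 - u ^ 2) -
          M * u ^ 2 / (M + b) ^ 2| := by ring_nf
    _ ≤ |((M * u) ^ 2 + (2 * a + 1) * (M * u) + a ^ 2) / (M + b) ^ 2 - u ^ 2| +
          |M * u ^ 2 / (M + b) ^ 2| := abs_sub _ _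
    _ ≤ (a + b + 1) ^ 2 / M * (1 + u ^ 2) + 1 / M * (1 + u ^ 2) := by
        gcongr
        · exact abs_szasz_moment_sub_sq_le ha hb hM hu
        · rw [abs_of_nonneg (by positivity)]
          exact hcorr
    _ = ((a + b + 1) ^ 2 + 1) / M * (1 + u ^ 2) := by ring

end ErrorBounds

theorem abs_L_sq_add_sq_sub_le {α₁ β₁ α₂ β₂ : ℝ} (hα₁ : 0 ≤ α₁) (hβ₁ : 0 ≤ β₁) (hα₂ : 0 ≤ α₂)
    (hβ₂ : 0 ≤ β₂) {m n : ℕ} (hm : 1 ≤ m) (hn : 1 ≤ n) {x y : ℝ} (hx : 0 ≤ x) (hy : 0 ≤ y) :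
    |L α₁ β₁ α₂ β₂ m n (fun t τ => t ^ 2 + τ ^ 2) x y - (x ^ 2 + y ^ 2)| ≤
      (((α₁ + β₁ + 1) ^ 2 + 1) / m + (α₂ + β₂ + 1) ^ 2 / n) * (1 + x ^ 2 + y ^ 2) := by
  have hm' : (1 : ℝ) ≤ m := by exact_mod_cast hm
  have hn' : (1 : ℝ) ≤ n := by exact_mod_cast hn
  have hbx := abs_bernstein_moment_sub_sq_le hα₁ hβ₁ hm' hx
  have hby := abs_szasz_moment_sub_sq_le hα₂ hβ₂ hn' hy
  rw [L_sq_add_sq, add_sub_add_comm]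
  calc _ ≤ _ := abs_add_le _ _
    _ ≤ _ := add_le_add hbx hby
    _ ≤ _ := by
      have : 0 ≤ ((α₁ + β₁ + 1) ^ 2 + 1) / m := by positivity
      have : 0 ≤ (α₂ + β₂ + 1) ^ 2 / n := by positivity
      nlinarith [sq_nonneg x, sq_nonneg y]

theorem exists_nat_forall_div_add_div_lt {C₁ C₂ ε : ℝ} (hC₁ : 0 ≤ C₁) (hC₂ : 0 ≤ C₂)
    (hε : 0 < ε) : ∃ N : ℕ, 0 < N ∧ ∀ m n : ℕ, N ≤ m → N ≤ n → C₁ / m + C₂ / n < ε := by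
  obtain ⟨N, hN⟩ := exists_nat_gt ((C₁ + C₂) / ε)
  have hN₀ : (0 : ℝ) < N := (div_nonneg (add_nonneg hC₁ hC₂) hε.le).trans_lt hN
  refine ⟨N, by exact_mod_cast hN₀, fun m n hm hn => ?_⟩
  have hm' : (N : ℝ) ≤ m := by exact_mod_cast hm
  have hn' : (N : ℝ) ≤ n := by exact_mod_cast hn
  calc C₁ / m + C₂ / n ≤ C₁ / N + C₂ / N := by gcongr
    _ = (C₁ + C₂) / N := by rw [add_div]
    _ < ε := by rwa [div_lt_iff₀ hN₀, mul_comm, ← div_lt_iff₀ hε]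

theorem L_squares_weighted_convergence (α₁ β₁ α₂ β₂ : ℝ) (hα₁ : 0 ≤ α₁) (hβ₁ : α₁ ≤ β₁)
    (hα₂ : 0 ≤ α₂) (hβ₂ : α₂ ≤ β₂) :
    ∀ ε > (0:ℝ), ∃ N : ℕ, ∀ m n : ℕ, N ≤ m → N ≤ n →
      ∀ x ∈ Set.Icc (0:ℝ) 1, ∀ y ∈ Set.Ici (0:ℝ),
        |L α₁ β₁ α₂ β₂ m n (fun t τ => t ^ 2 + τ ^ 2) x y - (x ^ 2 + y ^ 2)| /
            (1 + x ^ 2 + y ^ 2) < ε := by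
  intro ε hε
  obtain ⟨N, hN₀, hN⟩ := exists_nat_forall_div_add_div_lt
    (by positivity : 0 ≤ (α₁ + β₁ + 1) ^ 2 + 1) (sq_nonneg (α₂ + β₂ + 1)) hε
  refine ⟨N, fun m n hm hn x hx y hy => ?_⟩
  rw [div_lt_iff₀ (by positivity)]
  calc _ ≤ _ := abs_L_sq_add_sq_sub_le hα₁ (hα₁.trans hβ₁) hα₂ (hα₂.trans hβ₂)
        (hN₀.trans_le hm) (hN₀.trans_le hn) hx.1 hy
    _ < ε * (1 + x ^ 2 + y ^ 2) := by gcongr; exact hN m n hm hn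
end

section
/- For every continuous function f : [0,1]×[0,A] → ℝ (A > 0) extended to a bounded continuous function on [0,1]×[0,∞), sup_{(x,y)∈[0,1]×[0,A]} |L_{m,n}(f;x,y) − f(x,y)| → 0 as m,n → ∞. -/
open Finset Polynomial Filter
open scoped Nat

noncomputable def poissonWeight (t : ℝ) (k : ℕ) : ℝ := Real.exp (-t) * t ^ k / k !

lemma poissonWeight_nonneg {t : ℝ} (ht : 0 ≤ t) (k : ℕ) : 0 ≤ poissonWeight t k := by
  unfold poissonWeight; positivity

lemma hasSum_poissonWeight (t : ℝ) : HasSum (poissonWeight t) 1 := by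
  have h := (NormedSpace.expSeries_div_hasSum_exp t).mul_left (Real.exp (-t))
  rw [← Real.exp_eq_exp_ℝ, ← Real.exp_add, neg_add_cancel, Real.exp_zero] at h
  exact h.congr_fun fun k ↦ mul_div_assoc _ _ _

lemma poissonWeight_succ_mul (t : ℝ) (k : ℕ) :
    poissonWeight t (k + 1) * ((k : ℝ) + 1) = t * poissonWeight t k := by
  simp only [poissonWeight, Nat.factorial_succ, Nat.cast_mul, Nat.cast_succ]
  field_simp
  ring

lemma hasSum_poissonWeight_mul (t : ℝ) : HasSum (fun k ↦ poissonWeight t k * k) t := by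
  refine (hasSum_nat_add_iff' 1).mp ?_
  simpa [poissonWeight_succ_mul] using (hasSum_poissonWeight t).mul_left t

lemma hasSum_poissonWeight_mul_sq (t : ℝ) :
    HasSum (fun k ↦ poissonWeight t k * (k : ℝ) ^ 2) (t ^ 2 + t) := by
  refine (hasSum_nat_add_iff' 1).mp ?_
  have h := ((hasSum_poissonWeight_mul t).add (hasSum_poissonWeight t)).mul_left t
  rw [show t * (t + 1) = t ^ 2 + t - ∑ k ∈ range 1, poissonWeight t k * (k : ℝ) ^ 2 by simp; ring]
    at h
  refine h.congr_fun fun k ↦ ?_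
  push_cast
  rw [sq, ← mul_assoc, poissonWeight_succ_mul]
  ring

lemma hasSum_poissonWeight_mul_sub_sq (t : ℝ) :
    HasSum (fun k ↦ poissonWeight t k * ((k : ℝ) - t) ^ 2) t := by
  have h := ((hasSum_poissonWeight_mul_sq t).sub
    ((hasSum_poissonWeight_mul t).mul_left (2 * t))).add ((hasSum_poissonWeight t).mul_left (t ^ 2))
  rw [show t ^ 2 + t - 2 * t * t + t ^ 2 * 1 = t by ring] at h
  exact h.congr_fun fun k ↦ by ring

lemma bernsteinPolynomial_eval_nonneg {x : ℝ} (hx : x ∈ Set.Icc 0 1) (m ν : ℕ) :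
    0 ≤ (bernsteinPolynomial ℝ m ν).eval x := by
  obtain ⟨hx₀, hx₁⟩ := hx
  have := sub_nonneg.2 hx₁
  simp only [bernsteinPolynomial, eval_mul, eval_pow, eval_sub, eval_one, eval_X, eval_natCast]
  positivity

lemma hasSum_bernsteinPolynomial_eval_mul_range (m : ℕ) (x : ℝ) (g : ℕ → ℝ) :
    HasSum (fun ν ↦ (bernsteinPolynomial ℝ m ν).eval x * g ν)
      (∑ ν ∈ range (m + 1), (bernsteinPolynomial ℝ m ν).eval x * g ν) :=
  hasSum_sum_of_ne_finset_zero fun ν hν ↦ by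
    rw [bernsteinPolynomial.eq_zero_of_lt ℝ (by simpa using hν), eval_zero, zero_mul]

lemma hasSum_bernsteinPolynomial_eval (m : ℕ) (x : ℝ) :
    HasSum (fun ν ↦ (bernsteinPolynomial ℝ m ν).eval x) 1 := by
  simpa [← eval_finsetSum, bernsteinPolynomial.sum] using
    hasSum_bernsteinPolynomial_eval_mul_range m x 1

lemma hasSum_bernsteinPolynomial_eval_mul (m : ℕ) (x : ℝ) :
    HasSum (fun ν ↦ (bernsteinPolynomial ℝ m ν).eval x * ν) (m * x) := by
  have h := congrArg (eval x) (bernsteinPolynomial.sum_smul (R := ℝ) m)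
  simp only [eval_finsetSum, nsmul_eq_mul, eval_mul, eval_natCast, eval_X] at h
  convert hasSum_bernsteinPolynomial_eval_mul_range m x (fun ν ↦ ν) using 1
  rw [← h]
  exact sum_congr rfl fun ν _ ↦ mul_comm _ _

lemma hasSum_bernsteinPolynomial_eval_mul_sub_sq (m : ℕ) (x : ℝ) :
    HasSum (fun ν ↦ (bernsteinPolynomial ℝ m ν).eval x * ((ν : ℝ) - m * x) ^ 2)
      (m * x * (1 - x)) := by
  have h := congrArg (eval x) (bernsteinPolynomial.variance (R := ℝ) m)
  simp only [eval_finsetSum, eval_mul, eval_pow, eval_sub, eval_X, eval_natCast, eval_one,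
    nsmul_eq_mul] at h
  convert hasSum_bernsteinPolynomial_eval_mul_range m x (fun ν ↦ ((ν : ℝ) - m * x) ^ 2) using 1
  rw [← h]
  exact sum_congr rfl fun ν _ ↦ by ring

lemma hasSum_mul_div_add_sub_sq {ι : Type*} {w X : ι → ℝ} {N y V α β : ℝ} (hNβ : N + β ≠ 0)
    (h0 : HasSum w 1) (h1 : HasSum (fun i ↦ w i * X i) (N * y))
    (h2 : HasSum (fun i ↦ w i * (X i - N * y) ^ 2) V) :
    HasSum (fun i ↦ w i * ((X i + α) / (N + β) - y) ^ 2)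
      ((V + (α - β * y) ^ 2) / (N + β) ^ 2) := by
  have h := ((h2.add ((h1.sub (h0.mul_left (N * y))).mul_left (2 * (α - β * y)))).add
    (h0.mul_left ((α - β * y) ^ 2))).div_const ((N + β) ^ 2)
  -- the cross term vanishes because the weights have mean `N * y`
  rw [show N * y - N * y * 1 = 0 by ring, mul_zero, add_zero, mul_one] at h
  refine h.congr_fun fun i ↦ ?_
  field_simp
  ring

lemma stancu_second_moment_le {N V α β y a b : ℝ} (hN : 1 ≤ N) (hα : 0 ≤ α) (hαβ : α ≤ β)
    (hy : 0 ≤ y) (hyb : y ≤ b) (hV : 0 ≤ V) (hVa : V ≤ N * a) :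
    (V + (α - β * y) ^ 2) / (N + β) ^ 2 ≤ (a + β ^ 2 * (1 + b) ^ 2) / N := by
  have hβ : 0 ≤ β := hα.trans hαβ
  have hγ : (α - β * y) ^ 2 ≤ β ^ 2 * (1 + b) ^ 2 := by
    rw [← mul_pow]
    apply sq_le_sq'
    · nlinarith [mul_le_mul_of_nonneg_left hyb hβ]
    · nlinarith [mul_nonneg hβ hy, mul_nonneg hβ (hy.trans hyb)]
  have hG₀ : 0 ≤ β ^ 2 * (1 + b) ^ 2 := by positivity
  have hG : β ^ 2 * (1 + b) ^ 2 ≤ N * (β ^ 2 * (1 + b) ^ 2) := le_mul_of_one_le_left hG₀ hN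
  calc (V + (α - β * y) ^ 2) / (N + β) ^ 2
      ≤ (N * a + N * (β ^ 2 * (1 + b) ^ 2)) / N ^ 2 :=
        div_le_div₀ (by linarith) (by linarith) (by positivity) (by gcongr; linarith)
    _ = (a + β ^ 2 * (1 + b) ^ 2) / N := by field_simp

lemma abs_tsum_mul_sub_le {ι : Type*} {w a d : ι → ℝ} {z E c D : ℝ} (hw : ∀ i, 0 ≤ w i)
    (hw1 : HasSum w 1) (hd : HasSum (fun i ↦ w i * d i) D)
    (ha : ∀ i, w i ≠ 0 → |a i - z| ≤ E + c * d i) :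
    |∑' i, w i * a i - z| ≤ E + c * D := by
  have hb : HasSum (fun i ↦ w i * (E + c * d i)) (E + c * D) := by
    have h := (hw1.mul_right E).add (hd.mul_left c)
    rw [one_mul] at h
    exact h.congr_fun fun i ↦ by ring
  have hle : ∀ i, ‖w i * (a i - z)‖ ≤ w i * (E + c * d i) := by
    intro i
    rw [Real.norm_eq_abs, abs_mul, abs_of_nonneg (hw i)]
    rcases eq_or_ne (w i) 0 with h | h
    · simp [h]
    · exact mul_le_mul_of_nonneg_left (ha i h) (hw i)
  have hs : Summable (fun i ↦ w i * (a i - z)) := Summable.of_norm_bounded hb.summable hle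
  have hsub : ∑' i, w i * a i - z = ∑' i, w i * (a i - z) := by
    have h := hs.hasSum.add (hw1.mul_right z)
    rw [one_mul] at h
    rw [(h.congr_fun fun i ↦ by ring).tsum_eq, add_sub_cancel_right]
  rw [hsub, ← Real.norm_eq_abs]
  exact (norm_tsum_le_tsum_norm hs.norm).trans (hasSum_le hle hs.norm.hasSum hb)

lemma IsCompact.exists_pos_forall_dist_lt_of_continuousOn {α β : Type*} [PseudoMetricSpace α]
    [PseudoMetricSpace β] {f : α → β} {s K : Set α} (hK : IsCompact K) (hKs : K ⊆ s)
    (hf : ContinuousOn f s) {ε : ℝ} (hε : 0 < ε) :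
    ∃ δ > 0, ∀ q ∈ K, ∀ p ∈ s, dist q p < δ → dist (f q) (f p) < ε := by
  have hK' : IsCompact ((↑) ⁻¹' K : Set s) :=
    Topology.IsInducing.subtypeVal.isCompact_preimage' hK (by simpa using hKs)
  have hU := hK'.uniformContinuousAt_of_continuousAt (s.domRestrict f)
    (fun _ _ ↦ hf.domRestrict.continuousAt) (Metric.dist_mem_uniformity hε)
  obtain ⟨δ, hδ, hδU⟩ := Metric.mem_uniformity_dist.1 hU
  exact ⟨δ, hδ, fun q hq p hp hqp ↦ hδU (a := ⟨q, hKs hq⟩) (b := ⟨p, hp⟩) hqp hq⟩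

lemma ContinuousOn.exists_abs_sub_le_add_mul_dist_sq {α : Type*} [PseudoMetricSpace α]
    {g : α → ℝ} {s K : Set α} (hg : ContinuousOn g s) (hK : IsCompact K) (hKs : K ⊆ s)
    {C : ℝ} (hC : ∀ p ∈ s, |g p| ≤ C) {ε : ℝ} (hε : 0 < ε) :
    ∃ c ≥ 0, ∀ q ∈ K, ∀ p ∈ s, |g p - g q| ≤ ε + c * dist p q ^ 2 := by
  obtain ⟨δ, hδ, hδg⟩ := hK.exists_pos_forall_dist_lt_of_continuousOn hKs hg hε
  refine ⟨2 * |C| / δ ^ 2, by positivity, fun q hq p hp ↦ ?_⟩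
  rcases lt_or_ge (dist p q) δ with hpq | hpq
  · have h := hδg q hq p hp (by rwa [dist_comm])
    rw [Real.dist_eq, abs_sub_comm] at h
    exact h.le.trans (le_add_of_nonneg_right (by positivity))
  · calc |g p - g q| ≤ |g p| + |g q| := abs_sub _ _
      _ ≤ 2 * |C| := by linarith [hC p hp, hC q (hKs hq), le_abs_self C]
      _ = 2 * |C| / δ ^ 2 * δ ^ 2 := by field_simp
      _ ≤ 2 * |C| / δ ^ 2 * dist p q ^ 2 := by gcongr
      _ ≤ ε + 2 * |C| / δ ^ 2 * dist p q ^ 2 := le_add_of_nonneg_left hε.le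

lemma dist_sq_le_sq_add_sq (p q : ℝ × ℝ) : dist p q ^ 2 ≤ (p.1 - q.1) ^ 2 + (p.2 - q.2) ^ 2 := by
  rw [Prod.dist_eq, Real.dist_eq, Real.dist_eq]
  rcases max_cases |p.1 - q.1| |p.2 - q.2| with ⟨h, -⟩ | ⟨h, -⟩ <;>
    rw [h, sq_abs] <;> nlinarith [sq_nonneg (p.1 - q.1), sq_nonneg (p.2 - q.2)]

lemma add_div_add_mem_Icc {a b α β : ℝ} (ha : 0 ≤ a) (hab : a ≤ b) (hα : 0 ≤ α) (hαβ : α ≤ β) :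
    (a + α) / (b + β) ∈ Set.Icc 0 1 :=
  ⟨div_nonneg (by linarith) (by linarith), div_le_one_of_le₀ (by linarith) (by linarith)⟩

lemma L_eq_tsum_mul_tsum (α₁ β₁ α₂ β₂ : ℝ) (m n : ℕ) (f : ℝ → ℝ → ℝ) (x y : ℝ) :
    L α₁ β₁ α₂ β₂ m n f x y = ∑' k, poissonWeight (n * y) k *
      ∑' ν, (bernsteinPolynomial ℝ m ν).eval x * f ((ν + α₁) / (m + β₁)) ((k + α₂) / (n + β₂)) := by
  refine tsum_congr fun k ↦ ?_
  rw [(hasSum_bernsteinPolynomial_eval_mul_range m x _).tsum_eq, mul_sum]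
  refine sum_congr rfl fun ν _ ↦ ?_
  simp only [bernsteinPolynomial, poissonWeight, eval_mul, eval_pow, eval_sub, eval_one, eval_X,
    eval_natCast]
  ring

lemma abs_L_sub_le {α₁ β₁ α₂ β₂ : ℝ} (hα₁ : 0 ≤ α₁) (hβ₁ : α₁ ≤ β₁) (hα₂ : 0 ≤ α₂)
    (hβ₂ : α₂ ≤ β₂) {m n : ℕ} (hm : 0 < m) (hn : 0 < n) {f : ℝ → ℝ → ℝ} {x y E c : ℝ}
    (hx : x ∈ Set.Icc 0 1) (hy : 0 ≤ y)
    (hf : ∀ u ∈ Set.Icc (0 : ℝ) 1, ∀ v ∈ Set.Ici (0 : ℝ),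
      |f u v - f x y| ≤ E + c * ((u - x) ^ 2 + (v - y) ^ 2)) :
    |L α₁ β₁ α₂ β₂ m n f x y - f x y| ≤ E + c * ((m * x * (1 - x) + (α₁ - β₁ * x) ^ 2) / (m + β₁) ^ 2
      + (n * y + (α₂ - β₂ * y) ^ 2) / (n + β₂) ^ 2) := by
  have hβ₁' : 0 ≤ β₁ := hα₁.trans hβ₁
  have hβ₂' : 0 ≤ β₂ := hα₂.trans hβ₂
  have hb := hasSum_bernsteinPolynomial_eval m x
  have hp := hasSum_poissonWeight (n * y)
  have hM₁ := hasSum_mul_div_add_sub_sq (α := α₁) (β := β₁) (by positivity) hb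
    (hasSum_bernsteinPolynomial_eval_mul m x) (hasSum_bernsteinPolynomial_eval_mul_sub_sq m x)
  have hM₂ := hasSum_mul_div_add_sub_sq (α := α₂) (β := β₂) (by positivity) hp
    (hasSum_poissonWeight_mul _) (hasSum_poissonWeight_mul_sub_sq _)
  rw [L_eq_tsum_mul_tsum, mul_add, ← add_assoc]
  refine abs_tsum_mul_sub_le (poissonWeight_nonneg (by positivity)) hp hM₂ fun k _ ↦ ?_
  rw [add_right_comm]
  refine abs_tsum_mul_sub_le (bernsteinPolynomial_eval_nonneg hx m) hb hM₁ fun ν hν ↦ ?_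
  have hνm : ν ≤ m := by
    contrapose! hν
    rw [bernsteinPolynomial.eq_zero_of_lt ℝ hν, eval_zero]
  have := hf _ (add_div_add_mem_Icc ν.cast_nonneg (Nat.cast_le.2 hνm) hα₁ hβ₁) _
    (by positivity : (0 : ℝ) ≤ (k + α₂) / (n + β₂))
  linarith

theorem L_uniform_convergence_compact_general (α₁ β₁ α₂ β₂ A : ℝ) (hα₁ : 0 ≤ α₁) (hβ₁ : α₁ ≤ β₁)
    (hα₂ : 0 ≤ α₂) (hβ₂ : α₂ ≤ β₂) (f : ℝ → ℝ → ℝ)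
    (hfc : ContinuousOn (fun p : ℝ × ℝ => f p.1 p.2) (Set.Icc 0 1 ×ˢ Set.Ici 0))
    (hfb : ∃ C : ℝ, ∀ x ∈ Set.Icc (0:ℝ) 1, ∀ y ∈ Set.Ici (0:ℝ), |f x y| ≤ C) :
    ∀ ε > (0:ℝ), ∃ N : ℕ, ∀ m n : ℕ, N ≤ m → N ≤ n →
      ∀ x ∈ Set.Icc (0:ℝ) 1, ∀ y ∈ Set.Icc (0:ℝ) A,
        |L α₁ β₁ α₂ β₂ m n f x y - f x y| < ε := by
  intro ε hε
  obtain ⟨C, hC⟩ := hfb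
  obtain ⟨c, hc, hfq⟩ := hfc.exists_abs_sub_le_add_mul_dist_sq
    (isCompact_Icc.prod (isCompact_Icc (a := 0) (b := A)))
    (Set.prod_mono_right Set.Icc_subset_Ici_self) (fun p hp ↦ hC _ hp.1 _ hp.2) (half_pos hε)
  set C₁ := 1 + β₁ ^ 2 * (1 + 1) ^ 2
  set C₂ := A + β₂ ^ 2 * (1 + A) ^ 2
  have hsmall : ∀ C', ∀ᶠ N : ℕ in atTop, c * (C' / N) < ε / 4 :=
    fun C' ↦ ((tendsto_const_div_atTop_nhds_zero_nat C').const_mul c).eventually_lt_const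
      (by rw [mul_zero]; positivity)
  obtain ⟨N, hN⟩ :=
    eventually_atTop.1 ((eventually_ge_atTop 1).and ((hsmall C₁).and (hsmall C₂)))
  refine ⟨N, fun m n hm hn x hx y hy ↦ ?_⟩
  obtain ⟨hm₀, hm₁, -⟩ := hN m hm
  obtain ⟨hn₀, -, hn₂⟩ := hN n hn
  have hL := abs_L_sub_le (f := f) hα₁ hβ₁ hα₂ hβ₂ hm₀ hn₀ hx hy.1 fun u hu v hv ↦
    (hfq (x, y) ⟨hx, hy⟩ (u, v) ⟨hu, hv⟩).trans
      (by gcongr; exact dist_sq_le_sq_add_sq (u, v) (x, y))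
  obtain ⟨hx₀, hx₁⟩ := hx
  have h₁ := stancu_second_moment_le (V := m * x * (1 - x)) (a := 1) (Nat.one_le_cast.2 hm₀) hα₁ hβ₁
    hx₀ hx₁ (by have := sub_nonneg.2 hx₁; positivity)
    (by rw [mul_assoc]; exact mul_le_mul_of_nonneg_left (by nlinarith) m.cast_nonneg)
  have h₂ := stancu_second_moment_le (V := n * y) (Nat.one_le_cast.2 hn₀) hα₂ hβ₂ hy.1 hy.2
    (by have := hy.1; positivity) (mul_le_mul_of_nonneg_left hy.2 n.cast_nonneg)
  calc |L α₁ β₁ α₂ β₂ m n f x y - f x y|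
      ≤ ε / 2 + c * (C₁ / m + C₂ / n) := hL.trans (by gcongr)
    _ < ε := by linarith [mul_add c (C₁ / m) (C₂ / n)]

theorem L_uniform_convergence_compact (α₁ β₁ α₂ β₂ A : ℝ) (hα₁ : 0 ≤ α₁) (hβ₁ : α₁ ≤ β₁)
    (hα₂ : 0 ≤ α₂) (hβ₂ : α₂ ≤ β₂) (hA : 0 < A) (f : ℝ → ℝ → ℝ)
    (hfc : ContinuousOn (fun p : ℝ × ℝ => f p.1 p.2) (Set.Icc 0 1 ×ˢ Set.Ici 0))
    (hfb : ∃ C : ℝ, ∀ x ∈ Set.Icc (0:ℝ) 1, ∀ y ∈ Set.Ici (0:ℝ), |f x y| ≤ C) :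
    ∀ ε > (0:ℝ), ∃ N : ℕ, ∀ m n : ℕ, N ≤ m → N ≤ n →
      ∀ x ∈ Set.Icc (0:ℝ) 1, ∀ y ∈ Set.Icc (0:ℝ) A,
        |L α₁ β₁ α₂ β₂ m n f x y - f x y| < ε :=
  L_uniform_convergence_compact_general α₁ β₁ α₂ β₂ A hα₁ hβ₁ hα₂ hβ₂ f hfc hfb
end

section
/- For the Stancu operator on [0,1]: with 0 ≤ α ≤ β, P_n^{(α,β)}(f;x) = ∑_{k=0}^n C(n,k) x^k (1-x)^{n-k} f((k+α)/(n+β)) satisfies, for f ∈ Lip_M(γ) on [0,1] (|f(s)−f(t)| ≤ M|s−t|^γ, 0 < γ ≤ 1), the bound |P_n^{(α,β)}(f;x) − f(x)| ≤ 2M ((4β² + n)/(n+β)²)^{γ/2} for all x ∈ [0,1] and n ∈ ℕ. -/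
open Finset Polynomial

set_option maxHeartbeats 1000000 in
theorem stancu_lipschitz_rate (α β M γ : ℝ) (hα : 0 ≤ α) (hαβ : α ≤ β)
    (hM : 0 < M) (hγ0 : 0 < γ) (hγ1 : γ ≤ 1) (f : ℝ → ℝ)
    (hf : ∀ s ∈ Set.Icc (0:ℝ) 1, ∀ t ∈ Set.Icc (0:ℝ) 1, |f s - f t| ≤ M * |s - t| ^ γ)
    (n : ℕ) (hn : 1 ≤ n) (x : ℝ) (hx : x ∈ Set.Icc (0:ℝ) 1) :
    |(∑ k ∈ Finset.range (n + 1),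
        (n.choose k : ℝ) * x ^ k * (1 - x) ^ (n - k) * f ((k + α) / (n + β))) - f x| ≤
      2 * M * ((4 * β ^ 2 + n) / (n + β) ^ 2) ^ (γ / 2) := by
  obtain ⟨hx0, hx1⟩ := hx
  have hβ0 : 0 ≤ β := le_trans hα hαβ
  have hn1 : (1:ℝ) ≤ n := by exact_mod_cast hn
  have hnβ : 0 < (n : ℝ) + β := by linarith
  have h1x : 0 ≤ 1 - x := by linarith
  set p : ℕ → ℝ := fun k => (n.choose k : ℝ) * x ^ k * (1 - x) ^ (n - k) with hp
  have hpnn : ∀ k, 0 ≤ p k := fun k => by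
    simp only [hp]; positivity
  have hB : ∀ k, (bernsteinPolynomial ℝ n k).eval x = p k := by
    intro k; simp [bernsteinPolynomial, hp]
  have hsum : ∑ k ∈ range (n+1), p k = 1 := by
    have := congrArg (Polynomial.eval x) (bernsteinPolynomial.sum ℝ n)
    simpa [Polynomial.eval_finset_sum, hB] using this
  have h1 : ∑ k ∈ range (n+1), (k:ℝ) * p k = n * x := by
    have := congrArg (Polynomial.eval x) (bernsteinPolynomial.sum_smul ℝ n)
    simpa [Polynomial.eval_finset_sum, hB] using this
  have h2 : ∑ k ∈ range (n+1), ((k:ℝ) * ((k:ℝ) - 1)) * p k = (n:ℝ) * ((n:ℝ) - 1) * x^2 := by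
    have := congrArg (Polynomial.eval x) (bernsteinPolynomial.sum_mul_smul ℝ n)
    simp [Polynomial.eval_finset_sum, hB] at this
    calc ∑ k ∈ range (n+1), ((k:ℝ) * ((k:ℝ) - 1)) * p k
        = ∑ k ∈ range (n+1), (k:ℝ) * (((k-1 : ℕ)) : ℝ) * p k := by
          refine Finset.sum_congr rfl fun k _ => ?_
          cases k with
          | zero => simp
          | succ m => push_cast [Nat.succ_sub_one]; ring
      _ = (n:ℝ) * (((n-1 : ℕ)) : ℝ) * x^2 := this
      _ = (n:ℝ) * ((n:ℝ) - 1) * x^2 := by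
          cases n with
          | zero => simp
          | succ m => push_cast [Nat.succ_sub_one]; ring
  have hvar0 : ∑ k ∈ range (n+1), p k * ((k:ℝ) - n * x)^2 = n * x * (1 - x) := by
    have expand : ∀ k ∈ range (n+1), p k * ((k:ℝ) - n * x)^2 =
        ((k:ℝ) * ((k:ℝ) - 1)) * p k + (1 - 2 * n * x) * ((k:ℝ) * p k)
          + ((n:ℝ) * x)^2 * p k := fun k _ => by ring
    rw [Finset.sum_congr rfl expand]
    rw [Finset.sum_add_distrib, Finset.sum_add_distrib, h2, ← Finset.mul_sum, h1,
      ← Finset.mul_sum, hsum]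
    ring
  -- second moment bound
  set D : ℝ := (4 * β ^ 2 + n) / ((n:ℝ) + β) ^ 2 with hD
  have hDpos : 0 < D := by
    apply div_pos (by nlinarith) (by positivity)
  have hvar : ∑ k ∈ range (n+1), p k * (((k:ℝ) + α) / (n + β) - x)^2 ≤ D := by
    have key : ∀ k ∈ range (n+1), p k * (((k:ℝ) + α) / (n + β) - x)^2 ≤
        p k * ((2 * ((k:ℝ) - n * x)^2 + 2 * β^2) / ((n:ℝ) + β)^2) := by
      intro k _
      apply mul_le_mul_of_nonneg_left _ (hpnn k)
      have hrw : ((k:ℝ) + α) / (n + β) - x = (((k:ℝ) - n * x) + (α - β * x)) / ((n:ℝ) + β) := by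
        field_simp; ring
      rw [hrw, div_pow]
      gcongr
      have hc : (α - β * x)^2 ≤ β^2 := by
        have hb1 : -β ≤ α - β * x := by nlinarith
        have hb2 : α - β * x ≤ β := by nlinarith
        nlinarith
      nlinarith [sq_nonneg ((k:ℝ) - n * x - (α - β * x))]
    calc ∑ k ∈ range (n+1), p k * (((k:ℝ) + α) / (n + β) - x)^2
        ≤ ∑ k ∈ range (n+1), p k * ((2 * ((k:ℝ) - n * x)^2 + 2 * β^2) / ((n:ℝ) + β)^2) :=
          Finset.sum_le_sum key
      _ = (∑ k ∈ range (n+1), p k * ((k:ℝ) - n * x)^2) * (2 / ((n:ℝ) + β)^2)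
            + (∑ k ∈ range (n+1), p k) * (2 * β^2 / ((n:ℝ) + β)^2) := by
          rw [Finset.sum_mul, Finset.sum_mul, ← Finset.sum_add_distrib]
          exact Finset.sum_congr rfl fun k _ => by ring
      _ = (2 * ((n:ℝ) * x * (1 - x)) + 2 * β^2) / ((n:ℝ) + β)^2 := by
          rw [hvar0, hsum]; ring
      _ ≤ D := by
          rw [hD]
          have hnum : 2 * ((n:ℝ) * x * (1 - x)) + 2 * β^2 ≤ 4 * β^2 + n := by
            have hq : 2 * x * (1 - x) ≤ 1 / 2 := by nlinarith [sq_nonneg (2 * x - 1)]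
            nlinarith [mul_le_mul_of_nonneg_left hq (show (0:ℝ) ≤ (n:ℝ) by linarith)]
          exact div_le_div_of_nonneg_right hnum (by positivity)
  -- points are in [0,1]
  have ht : ∀ k ∈ range (n+1), ((k:ℝ) + α) / ((n:ℝ) + β) ∈ Set.Icc (0:ℝ) 1 := by
    intro k hk
    rw [Finset.mem_range] at hk
    have hk' : (k:ℝ) ≤ n := by exact_mod_cast Nat.lt_succ_iff.mp hk
    constructor
    · positivity
    · rw [div_le_one hnβ]; linarith
  -- pointwise power inequality
  have hpow : ∀ d : ℝ, |d| ^ γ ≤ D ^ (γ/2) * (1 + d^2 / D) := by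
    intro d
    have habs : |d| ^ γ = (d^2) ^ (γ/2) := by
      rw [show (d^2 : ℝ) = |d| ^ ((2:ℕ):ℝ) by rw [Real.rpow_natCast, sq_abs],
        ← Real.rpow_mul (abs_nonneg d)]
      norm_num
      rw [show 2 * (γ / 2) = γ by ring]
    rw [habs]
    rcases le_or_gt (d^2) D with h | h
    · calc (d^2) ^ (γ/2) ≤ D ^ (γ/2) := Real.rpow_le_rpow (sq_nonneg d) h (by positivity)
        _ ≤ D ^ (γ/2) * (1 + d^2 / D) := by
            apply le_mul_of_one_le_right (by positivity)
            have := div_nonneg (sq_nonneg d) hDpos.le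
            linarith
    · have h1 : (1:ℝ) ≤ d^2 / D := (one_le_div hDpos).mpr h.le
      calc (d^2) ^ (γ/2) = D ^ (γ/2) * ((d^2 / D)) ^ (γ/2) := by
            rw [← Real.mul_rpow hDpos.le (by positivity)]
            congr 1
            field_simp
        _ ≤ D ^ (γ/2) * (d^2 / D) := by
            apply mul_le_mul_of_nonneg_left _ (by positivity)
            calc ((d^2 / D)) ^ (γ/2) ≤ ((d^2 / D)) ^ (1:ℝ) :=
                  Real.rpow_le_rpow_of_exponent_le h1 (by linarith)
              _ = d^2 / D := Real.rpow_one _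
        _ ≤ D ^ (γ/2) * (1 + d^2 / D) := by
            apply mul_le_mul_of_nonneg_left _ (by positivity)
            linarith
  have key2 : ∀ k ∈ range (n+1),
      |f (((k:ℝ) + α) / ((n:ℝ) + β)) - f x| ≤
        M * (D ^ (γ/2) * (1 + (((k:ℝ) + α) / ((n:ℝ) + β) - x)^2 / D)) := by
    intro k hk
    calc |f (((k:ℝ) + α) / ((n:ℝ) + β)) - f x|
        ≤ M * |((k:ℝ) + α) / ((n:ℝ) + β) - x| ^ γ := hf _ (ht k hk) x ⟨hx0, hx1⟩
      _ ≤ M * (D ^ (γ/2) * (1 + (((k:ℝ) + α) / ((n:ℝ) + β) - x)^2 / D)) :=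
          mul_le_mul_of_nonneg_left (hpow _) hM.le
  have hgoal : ∑ k ∈ range (n+1),
      (n.choose k : ℝ) * x ^ k * (1 - x) ^ (n - k) * f (((k:ℝ) + α) / ((n:ℝ) + β))
      = ∑ k ∈ range (n+1), p k * f (((k:ℝ) + α) / ((n:ℝ) + β)) := rfl
  rw [hgoal]
  have hsplit : (∑ k ∈ range (n+1), p k * f (((k:ℝ) + α) / ((n:ℝ) + β))) - f x
      = ∑ k ∈ range (n+1), p k * (f (((k:ℝ) + α) / ((n:ℝ) + β)) - f x) := by
    simp only [mul_sub]
    rw [Finset.sum_sub_distrib, ← Finset.sum_mul, hsum, one_mul]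
  rw [hsplit]
  calc |∑ k ∈ range (n+1), p k * (f (((k:ℝ) + α) / ((n:ℝ) + β)) - f x)|
      ≤ ∑ k ∈ range (n+1), |p k * (f (((k:ℝ) + α) / ((n:ℝ) + β)) - f x)| :=
        Finset.abs_sum_le_sum_abs _ _
    _ = ∑ k ∈ range (n+1), p k * |f (((k:ℝ) + α) / ((n:ℝ) + β)) - f x| :=
        Finset.sum_congr rfl fun k _ => by rw [abs_mul, abs_of_nonneg (hpnn k)]
    _ ≤ ∑ k ∈ range (n+1), p k * (M * (D ^ (γ/2) * (1 + (((k:ℝ) + α) / ((n:ℝ) + β) - x)^2 / D))) :=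
        Finset.sum_le_sum fun k hk => mul_le_mul_of_nonneg_left (key2 k hk) (hpnn k)
    _ = M * D ^ (γ/2) * (∑ k ∈ range (n+1), p k)
        + M * D ^ (γ/2) / D * (∑ k ∈ range (n+1), p k * (((k:ℝ) + α) / ((n:ℝ) + β) - x)^2) := by
        rw [Finset.mul_sum, Finset.mul_sum, ← Finset.sum_add_distrib]
        exact Finset.sum_congr rfl fun k _ => by ring
    _ ≤ M * D ^ (γ/2) * 1 + M * D ^ (γ/2) / D * D := by
        apply add_le_add (le_of_eq (by rw [hsum]))
        exact mul_le_mul_of_nonneg_left hvar (by positivity)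
    _ = 2 * M * D ^ (γ/2) := by field_simp; ring
end

section
/- For the Szász–Mirakyan operator S_n(f;y) = ∑_{k=0}^∞ e^{-ny}(ny)^k/k! · f(k/n): if f : [0,∞) → ℝ is bounded and satisfies |f(s)−f(t)| ≤ M|s−t|^γ with 0 < γ ≤ 1, then for every A > 0, y ∈ [0,A], and n ∈ ℕ, |S_n(f;y) − f(y)| ≤ 2M (A/n)^{γ/2}. -/
open Real

/- Series lemmas for `x ^ k / k!`. -/

lemma szasz_tsum_q (x : ℝ) : ∑' k : ℕ, x ^ k / (Nat.factorial k : ℝ) = Real.exp x := by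
  rw [Real.exp_eq_exp_ℝ, NormedSpace.exp_eq_tsum_div]

lemma szasz_shift_kq (x : ℝ) :
    (fun k : ℕ => ((k + 1 : ℕ) : ℝ) * (x ^ (k + 1) / (Nat.factorial (k + 1) : ℝ)))
      = fun k : ℕ => x * (x ^ k / (Nat.factorial k : ℝ)) := by
  funext k
  have hk : (Nat.factorial (k + 1) : ℝ) = (k + 1 : ℝ) * (Nat.factorial k : ℝ) := by
    rw [Nat.factorial_succ]; push_cast; ring
  have hkpos : (0:ℝ) < (k + 1 : ℝ) := by positivity
  have hfpos : (0:ℝ) < (Nat.factorial k : ℝ) := by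
    exact_mod_cast Nat.factorial_pos k
  rw [hk]
  push_cast
  field_simp
  ring

lemma szasz_summable_kq (x : ℝ) :
    Summable (fun k : ℕ => (k : ℝ) * (x ^ k / (Nat.factorial k : ℝ))) := by
  rw [← summable_nat_add_iff 1]
  have h := szasz_shift_kq x
  rw [show (fun k : ℕ => ((k + 1 : ℕ) : ℝ) * (x ^ (k + 1) / (Nat.factorial (k + 1) : ℝ)))
      = fun k : ℕ => x * (x ^ k / (Nat.factorial k : ℝ)) from h]
  exact (Real.summable_pow_div_factorial x).mul_left x

lemma szasz_tsum_kq (x : ℝ) :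
    ∑' k : ℕ, (k : ℝ) * (x ^ k / (Nat.factorial k : ℝ)) = x * Real.exp x := by
  rw [Summable.tsum_eq_zero_add (szasz_summable_kq x)]
  simp only [Nat.cast_zero, zero_mul, zero_add]
  have := szasz_shift_kq x
  calc ∑' k : ℕ, ((k + 1 : ℕ) : ℝ) * (x ^ (k + 1) / (Nat.factorial (k + 1) : ℝ))
      = ∑' k : ℕ, x * (x ^ k / (Nat.factorial k : ℝ)) := by rw [this]
    _ = x * Real.exp x := by
        rw [tsum_mul_left, szasz_tsum_q]

lemma szasz_shift_k2q (x : ℝ) :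
    (fun k : ℕ => ((k + 1 : ℕ) : ℝ)^2 * (x ^ (k + 1) / (Nat.factorial (k + 1) : ℝ)))
      = fun k : ℕ => x * ((k : ℝ) * (x ^ k / (Nat.factorial k : ℝ)))
          + x * (x ^ k / (Nat.factorial k : ℝ)) := by
  funext k
  have hk : (Nat.factorial (k + 1) : ℝ) = (k + 1 : ℝ) * (Nat.factorial k : ℝ) := by
    rw [Nat.factorial_succ]; push_cast; ring
  have hkpos : (0:ℝ) < (k + 1 : ℝ) := by positivity
  have hfpos : (0:ℝ) < (Nat.factorial k : ℝ) := by
    exact_mod_cast Nat.factorial_pos k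
  rw [hk]
  push_cast
  field_simp
  ring

lemma szasz_summable_k2q (x : ℝ) :
    Summable (fun k : ℕ => (k : ℝ)^2 * (x ^ k / (Nat.factorial k : ℝ))) := by
  rw [← summable_nat_add_iff 1]
  have := szasz_shift_k2q x
  simp only [this]
  exact ((szasz_summable_kq x).mul_left x).add
    ((Real.summable_pow_div_factorial x).mul_left x)

lemma szasz_tsum_k2q (x : ℝ) :
    ∑' k : ℕ, (k : ℝ)^2 * (x ^ k / (Nat.factorial k : ℝ))
      = (x^2 + x) * Real.exp x := by
  rw [Summable.tsum_eq_zero_add (szasz_summable_k2q x), szasz_shift_k2q x,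
    Summable.tsum_add ((szasz_summable_kq x).mul_left x)
      ((Real.summable_pow_div_factorial x).mul_left x),
    tsum_mul_left, tsum_mul_left, szasz_tsum_kq, szasz_tsum_q]
  norm_num
  ring

/- the Hölder pointwise bound -/
lemma szasz_holder_ptwise (γ δ t : ℝ) (hγ0 : 0 < γ) (hγ1 : γ ≤ 1) (hδ : 0 < δ) :
    |t| ^ γ ≤ δ ^ γ + t ^ 2 * δ ^ (γ - 2) := by
  by_cases h : |t| ≤ δ
  · have h1 : |t| ^ γ ≤ δ ^ γ := Real.rpow_le_rpow (abs_nonneg t) h hγ0.le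
    nlinarith [Real.rpow_nonneg hδ.le (γ - 2), sq_nonneg t,
      mul_nonneg (sq_nonneg t) (Real.rpow_nonneg hδ.le (γ - 2))]
  · push_neg at h
    have ht : 0 < |t| := hδ.trans h
    have h1 : |t| ^ γ = |t| ^ (γ - 2) * |t| ^ (2:ℝ) := by
      rw [← Real.rpow_add ht]; ring_nf
    have h2 : |t| ^ (γ - 2) ≤ δ ^ (γ - 2) :=
      Real.rpow_le_rpow_of_nonpos hδ h.le (by linarith)
    have h3 : |t| ^ (2:ℝ) = t ^ 2 := by
      rw [show (2:ℝ) = ((2:ℕ):ℝ) by norm_num, Real.rpow_natCast, sq_abs]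
    have h4 : |t| ^ γ ≤ δ ^ (γ - 2) * t ^ 2 := by
      rw [h1, h3]
      exact mul_le_mul_of_nonneg_right h2 (sq_nonneg t)
    have h5 : (0:ℝ) ≤ δ ^ γ := Real.rpow_nonneg hδ.le γ
    linarith [h4, h5, mul_comm (δ ^ (γ - 2)) (t ^ 2)]

theorem szasz_holder_rate (M γ A : ℝ) (hM : 0 < M) (hγ0 : 0 < γ) (hγ1 : γ ≤ 1)
    (hA : 0 < A) (f : ℝ → ℝ) (hfb : ∃ C : ℝ, ∀ t ∈ Set.Ici (0:ℝ), |f t| ≤ C)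
    (hf : ∀ s ∈ Set.Ici (0:ℝ), ∀ t ∈ Set.Ici (0:ℝ), |f s - f t| ≤ M * |s - t| ^ γ)
    (n : ℕ) (hn : 1 ≤ n) (y : ℝ) (hy : y ∈ Set.Icc (0:ℝ) A) :
    |(∑' k : ℕ, Real.exp (-(n * y)) * (n * y) ^ k / (Nat.factorial k : ℝ) * f (k / n)) - f y| ≤
      2 * M * (A / n) ^ (γ / 2) := by
  obtain ⟨hy0, hyA⟩ := hy
  have hnR : (0:ℝ) < (n:ℝ) := by exact_mod_cast hn
  set x : ℝ := n * y with hx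
  have hx0 : 0 ≤ x := by positivity
  set p : ℕ → ℝ := fun k => Real.exp (-x) * (x ^ k / (Nat.factorial k : ℝ)) with hp
  have hpnn : ∀ k, 0 ≤ p k := fun k => by
    have : (0:ℝ) < (Nat.factorial k : ℝ) := by exact_mod_cast Nat.factorial_pos k
    positivity
  have hsum_p : Summable p := (Real.summable_pow_div_factorial x).mul_left _
  have hsum_kp : Summable (fun k : ℕ => (k:ℝ) * p k) := by
    have := (szasz_summable_kq x).mul_left (Real.exp (-x))
    refine this.congr fun k => by simp [hp]; ring
  have hsum_k2p : Summable (fun k : ℕ => (k:ℝ)^2 * p k) := by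
    have := (szasz_summable_k2q x).mul_left (Real.exp (-x))
    refine this.congr fun k => by simp [hp]; ring
  have htsum_p : ∑' k : ℕ, p k = 1 := by
    rw [hp, tsum_mul_left, szasz_tsum_q, ← Real.exp_add]; simp
  have htsum_kp : ∑' k : ℕ, (k:ℝ) * p k = x := by
    have : ∑' k : ℕ, (k:ℝ) * p k = Real.exp (-x) * ∑' k : ℕ, (k:ℝ) * (x ^ k / (Nat.factorial k : ℝ)) := by
      rw [← tsum_mul_left]
      exact tsum_congr fun k => by simp [hp]; ring
    rw [this, szasz_tsum_kq, ← mul_assoc, mul_comm (Real.exp (-x)) x, mul_assoc,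
      ← Real.exp_add]
    simp
  have htsum_k2p : ∑' k : ℕ, (k:ℝ)^2 * p k = x^2 + x := by
    have : ∑' k : ℕ, (k:ℝ)^2 * p k
        = Real.exp (-x) * ∑' k : ℕ, (k:ℝ)^2 * (x ^ k / (Nat.factorial k : ℝ)) := by
      rw [← tsum_mul_left]
      exact tsum_congr fun k => by simp [hp]; ring
    rw [this, szasz_tsum_k2q, ← mul_assoc, mul_comm (Real.exp (-x)) (x^2+x), mul_assoc,
      ← Real.exp_add]
    simp
  -- second central moment
  have hmom_eq : (fun k : ℕ => p k * ((k:ℝ)/n - y)^2)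
      = fun k : ℕ => (1/(n:ℝ)^2) * ((k:ℝ)^2 * p k) + (-(2*y/n)) * ((k:ℝ) * p k)
        + y^2 * p k := by
    funext k
    field_simp
    ring
  have hsum_mom : Summable (fun k : ℕ => p k * ((k:ℝ)/n - y)^2) := by
    rw [hmom_eq]
    exact ((hsum_k2p.mul_left _).add (hsum_kp.mul_left _)).add (hsum_p.mul_left _)
  have htsum_mom : ∑' k : ℕ, p k * ((k:ℝ)/n - y)^2 = y / n := by
    rw [hmom_eq]
    rw [Summable.tsum_add ((hsum_k2p.mul_left _).add (hsum_kp.mul_left _)) (hsum_p.mul_left _),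
      Summable.tsum_add (hsum_k2p.mul_left _) (hsum_kp.mul_left _),
      tsum_mul_left, tsum_mul_left, tsum_mul_left, htsum_k2p, htsum_kp, htsum_p, hx]
    field_simp
    ring
  -- setup δ
  set δ : ℝ := Real.sqrt (A / n) with hδdef
  have hAn : (0:ℝ) < A / n := by positivity
  have hδ : 0 < δ := Real.sqrt_pos.mpr hAn
  have hδsq : δ ^ 2 = A / n := Real.sq_sqrt hAn.le
  -- bound on each term
  have hkn : ∀ k : ℕ, (0:ℝ) ≤ (k:ℝ)/n := fun k => by positivity
  have hterm : ∀ k : ℕ, |f ((k:ℝ)/n) - f y| ≤ M * δ ^ γ + M * δ ^ (γ-2) * ((k:ℝ)/n - y)^2 := by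
    intro k
    have h1 := hf ((k:ℝ)/n) (hkn k) y hy0
    have h2 := szasz_holder_ptwise γ δ ((k:ℝ)/n - y) hγ0 hγ1 hδ
    nlinarith [h1, h2, hM.le]
  -- summability of the f series
  obtain ⟨C, hC⟩ := hfb
  have hsum_f : Summable (fun k : ℕ => p k * f ((k:ℝ)/n)) := by
    have hC0 : 0 ≤ C := le_trans (abs_nonneg _) (hC 0 (Set.mem_Ici.mpr le_rfl))
    refine Summable.of_abs (Summable.of_nonneg_of_le (fun k => abs_nonneg _)
      (fun k => ?_) (hsum_p.mul_right C))
    rw [abs_mul, abs_of_nonneg (hpnn k)]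
    exact mul_le_mul_of_nonneg_left (hC _ (hkn k)) (hpnn k)
  -- rewrite S - f y as a tsum
  have hfy : ∑' k : ℕ, p k * f y = f y := by rw [tsum_mul_right, htsum_p, one_mul]
  have hrw : (∑' k : ℕ, Real.exp (-(n * y)) * (n * y) ^ k / (Nat.factorial k : ℝ) * f ((k:ℝ) / n))
      = ∑' k : ℕ, p k * f ((k:ℝ)/n) := by
    exact tsum_congr fun k => by rw [hp, hx]; ring
  have hsum_fy : Summable (fun k : ℕ => p k * f y) := hsum_p.mul_right _
  have hsum_diff : Summable (fun k : ℕ => p k * f ((k:ℝ)/n) - p k * f y) := hsum_f.sub hsum_fy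
  have hdiff : (∑' k : ℕ, p k * f ((k:ℝ)/n)) - f y
      = ∑' k : ℕ, (p k * f ((k:ℝ)/n) - p k * f y) := by
    rw [Summable.tsum_sub hsum_f hsum_fy, hfy]
  -- bound majorant summable
  have hsum_maj : Summable (fun k : ℕ =>
      M * δ ^ γ * p k + M * δ ^ (γ-2) * (p k * ((k:ℝ)/n - y)^2)) :=
    (hsum_p.mul_left _).add (hsum_mom.mul_left _)
  have habs_le : ∀ k : ℕ, |p k * f ((k:ℝ)/n) - p k * f y|
      ≤ M * δ ^ γ * p k + M * δ ^ (γ-2) * (p k * ((k:ℝ)/n - y)^2) := by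
    intro k
    rw [← mul_sub, abs_mul, abs_of_nonneg (hpnn k)]
    calc p k * |f ((k:ℝ)/n) - f y|
        ≤ p k * (M * δ ^ γ + M * δ ^ (γ-2) * ((k:ℝ)/n - y)^2) :=
          mul_le_mul_of_nonneg_left (hterm k) (hpnn k)
      _ = M * δ ^ γ * p k + M * δ ^ (γ-2) * (p k * ((k:ℝ)/n - y)^2) := by ring
  have hsum_abs : Summable (fun k : ℕ => |p k * f ((k:ℝ)/n) - p k * f y|) :=
    Summable.of_nonneg_of_le (fun k => abs_nonneg _) habs_le hsum_maj
  have hbound : |∑' k : ℕ, (p k * f ((k:ℝ)/n) - p k * f y)|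
      ≤ ∑' k : ℕ, (M * δ ^ γ * p k + M * δ ^ (γ-2) * (p k * ((k:ℝ)/n - y)^2)) := by
    calc |∑' k : ℕ, (p k * f ((k:ℝ)/n) - p k * f y)|
        ≤ ∑' k : ℕ, |p k * f ((k:ℝ)/n) - p k * f y| := by
          have h := norm_tsum_le_tsum_norm
            (f := fun k : ℕ => p k * f ((k:ℝ)/n) - p k * f y)
            (by simpa [Real.norm_eq_abs] using hsum_abs)
          simpa [Real.norm_eq_abs] using h
      _ ≤ _ := Summable.tsum_le_tsum habs_le hsum_abs hsum_maj
  have htsum_maj : ∑' k : ℕ, (M * δ ^ γ * p k + M * δ ^ (γ-2) * (p k * ((k:ℝ)/n - y)^2))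
      = M * δ ^ γ + M * δ ^ (γ-2) * (y/n) := by
    rw [Summable.tsum_add (hsum_p.mul_left _) (hsum_mom.mul_left _),
      show (∑' k : ℕ, M * δ ^ γ * p k) = M * δ ^ γ * ∑' k : ℕ, p k from tsum_mul_left,
      show (∑' k : ℕ, M * δ ^ (γ-2) * (p k * ((k:ℝ)/n - y)^2))
        = M * δ ^ (γ-2) * ∑' k : ℕ, p k * ((k:ℝ)/n - y)^2 from tsum_mul_left,
      htsum_p, htsum_mom, mul_one]
  -- final numeric bound
  have hfinal : M * δ ^ γ + M * δ ^ (γ-2) * (y/n) ≤ 2 * M * (A / n) ^ (γ/2) := by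
    have hδγ : δ ^ γ = (A / n) ^ (γ/2) := by
      rw [hδdef, Real.sqrt_eq_rpow, ← Real.rpow_mul hAn.le]
      congr 1
      ring
    have h2 : δ ^ (γ-2) * (A/n) = δ ^ γ := by
      rw [← hδsq, ← Real.rpow_natCast δ 2, ← Real.rpow_add hδ]
      norm_num
    have h1 : y/n ≤ A/n := by gcongr
    have h3 : (0:ℝ) ≤ δ ^ (γ-2) := Real.rpow_nonneg hδ.le _
    rw [← hδγ]
    nlinarith [h2, mul_le_mul_of_nonneg_left h1 (mul_nonneg hM.le h3)]
  calc |(∑' k : ℕ, Real.exp (-(n * y)) * (n * y) ^ k / (Nat.factorial k : ℝ) * f ((k:ℝ) / n)) - f y|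
      = |∑' k : ℕ, (p k * f ((k:ℝ)/n) - p k * f y)| := by rw [hrw, hdiff]
    _ ≤ M * δ ^ γ + M * δ ^ (γ-2) * (y/n) := hbound.trans_eq htsum_maj
    _ ≤ 2 * M * (A / n) ^ (γ/2) := hfinal
end
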